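/- Let (X, ρ) be a compact metric space. Then dim(X) = lim_{ε→0⁺} Widim_ε(X, ρ), where dim denotes the Lebesgue covering dimension. -/

import Mathlib

open Set Filter Topology ENNReal

def covDimLE (X : Type*) [TopologicalSpace X] (n : ℕ) : Prop :=
  ∀ (ι : Type) (U : ι → Set X), Finite ι → (∀ i, IsOpen (U i)) → (⋃ i, U i) = univ →
    ∃ (κ : Type) (V : κ → Set X), Finite κ ∧ (∀ k, IsOpen (V k)) ∧ (⋃ k, V k) = univ ∧
      (∀ k, ∃ i, V k ⊆ U i) ∧ ∀ x : X, {k | x ∈ V k}.ncard ≤ n + 1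

/-- The Lebesgue covering dimension of a topological space, valued in `ℕ∞`
(`⊤` means infinite-dimensional). -/
noncomputable def covDim (X : Type*) [TopologicalSpace X] : ℕ∞ :=
  sInf {m : ℕ∞ | ∃ n : ℕ, m = n ∧ covDimLE X n}

/-- `Widim_ε(X, ρ)`: the minimal covering dimension of a compact metrizable space `P`
admitting a continuous `ε`-embedding `f : X → P` (i.e. `f x = f y → dist x y < ε`). -/
noncomputable def widim (X : Type*) (mX : MetricSpace X) (ε : ℝ) : ℕ∞ :=
  sInf {k : ℕ∞ | ∃ (P : Type) (_ : MetricSpace P) (_ : CompactSpace P)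
    (f : X → P), @Continuous X P mX.toUniformSpace.toTopologicalSpace _ f ∧
      (∀ x y : X, f x = f y → @dist X mX.toDist x y < ε) ∧ covDim P = k}

/-!
Taking `P = X` and `f = id` gives `Widim_ε X ≤ dim X`, and `Widim_ε X` grows as `ε` shrinks, so
the limit exists and equals `sup_ε Widim_ε X`. Conversely, let `U` be a finite open cover of `X`
with Lebesgue number `δ` and `f : X → P` a continuous `δ`-embedding into a compact space of
dimension `≤ n`. Every fibre of `f` lies in a `δ`-ball, hence in some `U i`. As `f` is a closed
map, the sets `P \ f (X \ U i)` form an open cover of `P`; pulling back a refinement of it of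
order `≤ n + 1` refines `U` with the same order. Hence `dim X ≤ sup_ε Widim_ε X`.
-/

open Metric

theorem ENat.exists_mem_le_of_sInf_le_coe {s : Set ℕ∞} {n : ℕ} (h : sInf s ≤ n) :
    ∃ m ∈ s, m ≤ n :=
  ⟨sInf s, csInf_mem (nonempty_iff_ne_empty.mpr fun hs => by simp [hs] at h), h⟩

section CoveringDimension

variable {X : Type*} [TopologicalSpace X]

theorem covDimLE.mono {m n : ℕ} (h : covDimLE X m) (hmn : m ≤ n) : covDimLE X n := by
  intro ι U hι hU hcov
  obtain ⟨κ, V, hκ, hV, hVcov, hVU, hord⟩ := h ι U hι hU hcov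
  exact ⟨κ, V, hκ, hV, hVcov, hVU, fun x => (hord x).trans (by omega)⟩

theorem covDim_le_of_covDimLE {n : ℕ} (h : covDimLE X n) : covDim X ≤ n :=
  sInf_le ⟨n, rfl, h⟩

theorem covDimLE_of_covDim_le {n : ℕ} (h : covDim X ≤ n) : covDimLE X n := by
  obtain ⟨_, ⟨k, rfl, hk⟩, hkn⟩ := ENat.exists_mem_le_of_sInf_le_coe h
  exact hk.mono (by exact_mod_cast hkn)

theorem exists_refinement_of_fibers_subset {P : Type*} [TopologicalSpace P] {f : X → P}
    (hf : Continuous f) (hfc : IsClosedMap f) {n : ℕ} (hP : covDimLE P n) {ι : Type}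
    (hι : Finite ι) (U : ι → Set X) (hU : ∀ i, IsOpen (U i))
    (hfib : ∀ p, ∃ i, f ⁻¹' {p} ⊆ U i) :
    ∃ (κ : Type) (V : κ → Set X), Finite κ ∧ (∀ k, IsOpen (V k)) ∧ (⋃ k, V k) = univ ∧
      (∀ k, ∃ i, V k ⊆ U i) ∧ ∀ x : X, {k | x ∈ V k}.ncard ≤ n + 1 := by
  set W : ι → Set P := fun i => (f '' (U i)ᶜ)ᶜ
  have hfW : ∀ i, f ⁻¹' W i ⊆ U i := fun i x hx => by_contra fun hxU => hx ⟨x, hxU, rfl⟩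
  have hWcov : ⋃ i, W i = univ := eq_univ_of_forall fun p => by
    obtain ⟨i, hi⟩ := hfib p
    exact mem_iUnion.mpr ⟨i, fun ⟨x, hxU, hxp⟩ => hxU (hi hxp)⟩
  obtain ⟨κ, V, hκ, hV, hVcov, hVW, hord⟩ :=
    hP ι W hι (fun i => (hfc _ (hU i).isClosed_compl).isOpen_compl) hWcov
  refine ⟨κ, fun k => f ⁻¹' V k, hκ, fun k => (hV k).preimage hf,
    by rw [← preimage_iUnion, hVcov, preimage_univ], fun k => ?_, fun x => hord (f x)⟩
  obtain ⟨i, hi⟩ := hVW k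
  exact ⟨i, (preimage_mono hi).trans (hfW i)⟩

end CoveringDimension

section EpsEmbedding

variable {X : Type*} [MetricSpace X]

theorem covDimLE_of_forall_eps_embedding [CompactSpace X] {n : ℕ}
    (h : ∀ ε > 0, ∃ (P : Type) (_ : TopologicalSpace P) (_ : T2Space P) (f : X → P),
      Continuous f ∧ (∀ x y, f x = f y → dist x y < ε) ∧ covDimLE P n) :
    covDimLE X n := by
  intro ι U hι hU hcov
  rcases isEmpty_or_nonempty ι with _ | ⟨⟨i₀⟩⟩
  · exact ⟨ι, U, hι, hU, hcov, fun k => ⟨k, subset_rfl⟩,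
      fun x => by simp [eq_empty_of_isEmpty {k | x ∈ U k}]⟩
  obtain ⟨δ, hδ, hLeb⟩ := lebesgue_number_lemma_of_metric isCompact_univ hU hcov.ge
  obtain ⟨P, _, _, f, hf, hfδ, hP⟩ := h δ hδ
  refine exists_refinement_of_fibers_subset hf hf.isClosedMap hP hι U hU fun p => ?_
  by_cases hp : p ∈ range f
  · obtain ⟨x, rfl⟩ := hp
    obtain ⟨i, hi⟩ := hLeb x (mem_univ x)
    exact ⟨i, fun y hy => hi (mem_ball.mpr (hfδ y x hy))⟩
  · exact ⟨i₀, fun y hy => absurd ⟨y, hy⟩ hp⟩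

theorem exists_eps_embedding_of_widim_le {ε : ℝ} {n : ℕ} (h : widim X inferInstance ε ≤ n) :
    ∃ (P : Type) (_ : MetricSpace P) (_ : CompactSpace P) (f : X → P),
      Continuous f ∧ (∀ x y, f x = f y → dist x y < ε) ∧ covDimLE P n := by
  obtain ⟨_, ⟨P, mP, cP, f, hf, hfε, rfl⟩, hP⟩ := ENat.exists_mem_le_of_sInf_le_coe h
  exact ⟨P, mP, cP, f, hf, hfε, covDimLE_of_covDim_le hP⟩

theorem covDim_le_of_forall_widim_le [CompactSpace X] {n : ℕ}
    (h : ∀ ε > 0, widim X inferInstance ε ≤ n) : covDim X ≤ n :=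
  covDim_le_of_covDimLE <| covDimLE_of_forall_eps_embedding fun ε hε => by
    obtain ⟨P, _, _, f, hf, hfε, hP⟩ := exists_eps_embedding_of_widim_le (h ε hε)
    exact ⟨P, _, inferInstance, f, hf, hfε, hP⟩

end EpsEmbedding

theorem widim_antitone (X : Type*) [MetricSpace X] : Antitone (widim X inferInstance) :=
  fun _ _ hεε' => sInf_le_sInf fun _ ⟨P, mP, cP, f, hf, hfε, hP⟩ =>
    ⟨P, mP, cP, f, hf, fun x y hxy => (hfε x y hxy).trans_le hεε', hP⟩

theorem widim_le_covDim (X : Type) [MetricSpace X] [CompactSpace X] {ε : ℝ} (hε : 0 < ε) :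
    widim X inferInstance ε ≤ covDim X :=
  sInf_le ⟨X, inferInstance, inferInstance, id, continuous_id,
    fun x y hxy => by simpa [show x = y from hxy] using hε, rfl⟩

theorem sSup_widim_eq_covDim (X : Type) [MetricSpace X] [CompactSpace X] :
    sSup (widim X inferInstance '' Ioi 0) = covDim X := by
  refine le_antisymm (sSup_le ?_) ?_
  · rintro _ ⟨ε, hε, rfl⟩
    exact widim_le_covDim X hε
  · induction h : sSup (widim X inferInstance '' Ioi 0) using ENat.recTopCoe with
    | top => exact le_top
    | coe n => exact covDim_le_of_forall_widim_le fun ε hε => h ▸ le_sSup (mem_image_of_mem _ hε)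

/-- for a compact metric space, `dim(X) = lim_{ε→0⁺} Widim_ε(X, ρ)`. -/
theorem covDim_eq_limit_widim (X : Type) [MetricSpace X] [CompactSpace X] :
    Filter.Tendsto (fun ε : ℝ => ((widim X inferInstance ε : ℝ≥0∞)))
      (nhdsWithin 0 (Set.Ioi 0)) (nhds ((covDim X : ℝ≥0∞))) := by
  have h := (ENat.continuous_toENNReal.tendsto _).comp ((widim_antitone X).tendsto_nhdsGT 0)
  rwa [sSup_widim_eq_covDim] at h
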